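/- arXiv:1310.4681 — 3 statements merged into one kernel-verified Lean document; each statement's English description precedes it below -/
import Mathlib

section
/- For any integer N ≥ 2 and any real probability q with 0 < q ≤ 1/64, the probability that a binomial random variable with N trials and success probability q is at most (3/8)N is at least 1 - q^{3N/16}. -/
open Finset

/-- CDF of the binomial distribution with `n` trials and success probability `q`,
evaluated at a real threshold `t`: the probability that `Bin(n,q) ≤ t`. -/
noncomputable def binomCdf (n : ℕ) (q t : ℝ) : ℝ :=
  ∑ k ∈ Finset.range (n + 1),
    if (k : ℝ) ≤ t then (n.choose k : ℝ) * q ^ k * (1 - q) ^ (n - k) else 0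

theorem stmt_1 (N : ℕ) (hN : 2 ≤ N) (q : ℝ) (hq0 : 0 < q) (hq : q ≤ 1 / 64) :
    1 - q ^ ((3 : ℝ) * N / 16) ≤ binomCdf N q ((3 / 8 : ℝ) * N) := by
  have hq1 : q ≤ 1 := le_trans hq (by norm_num)
  have h1q : (0:ℝ) ≤ 1 - q := by linarith
  have htotal : ∑ k ∈ Finset.range (N+1),
      (N.choose k : ℝ) * q ^ k * (1-q)^(N-k) = 1 := by
    calc ∑ k ∈ Finset.range (N+1), (N.choose k : ℝ) * q ^ k * (1-q)^(N-k)
        = ∑ k ∈ Finset.range (N+1), q ^ k * (1-q)^(N-k) * (N.choose k : ℝ) := by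
          apply Finset.sum_congr rfl; intro k _; ring
      _ = (q + (1-q))^N := (add_pow q (1-q) N).symm
      _ = 1 := by norm_num
  have hsum : binomCdf N q ((3 / 8 : ℝ) * N)
      + ∑ k ∈ Finset.range (N+1),
        (if ¬ ((k:ℝ) ≤ (3/8:ℝ) * N) then (N.choose k : ℝ) * q ^ k * (1-q)^(N-k) else 0)
      = ∑ k ∈ Finset.range (N+1), (N.choose k : ℝ) * q ^ k * (1-q)^(N-k) := by
    rw [binomCdf, ← Finset.sum_add_distrib]
    apply Finset.sum_congr rfl
    intro k _
    by_cases h : (k:ℝ) ≤ (3/8:ℝ) * N <;> simp [h]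
  have key : ∑ k ∈ Finset.range (N+1),
      (if ¬ ((k:ℝ) ≤ (3/8:ℝ) * N) then (N.choose k : ℝ) * q ^ k * (1-q)^(N-k) else 0)
      ≤ q ^ ((3 : ℝ) * N / 16) := by
    have step1 : ∑ k ∈ Finset.range (N+1),
        (if ¬ ((k:ℝ) ≤ (3/8:ℝ) * N) then (N.choose k : ℝ) * q ^ k * (1-q)^(N-k) else 0)
        ≤ ∑ k ∈ Finset.range (N+1), (N.choose k : ℝ) * q ^ ((3:ℝ) * N / 8) := by
      apply Finset.sum_le_sum
      intro k _
      have hpos : (0:ℝ) < q ^ ((3:ℝ) * N / 8) := Real.rpow_pos_of_pos hq0 _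
      by_cases h : (k:ℝ) ≤ (3/8:ℝ) * N
      · simp only [h, not_true, if_false]
        positivity
      · simp only [h, not_false_iff, if_true]
        have hk : (3:ℝ) * N / 8 ≤ (k:ℝ) := by
          push_neg at h; linarith
        have hqk : q ^ k ≤ q ^ ((3:ℝ) * N / 8) := by
          rw [← Real.rpow_natCast q k]
          exact Real.rpow_le_rpow_of_exponent_ge hq0 hq1 hk
        have h1 : (1-q)^(N-k) ≤ 1 := pow_le_one₀ h1q (by linarith)
        calc (N.choose k : ℝ) * q ^ k * (1-q)^(N-k)
            ≤ (N.choose k : ℝ) * q ^ k * 1 := by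
              apply mul_le_mul_of_nonneg_left h1 (by positivity)
          _ = (N.choose k : ℝ) * q ^ k := by ring
          _ ≤ (N.choose k : ℝ) * q ^ ((3:ℝ) * N / 8) := by
              apply mul_le_mul_of_nonneg_left hqk (by positivity)
    have step2 : ∑ k ∈ Finset.range (N+1), (N.choose k : ℝ) * q ^ ((3:ℝ) * N / 8)
        = 2^N * q ^ ((3:ℝ) * N / 8) := by
      rw [← Finset.sum_mul]
      congr 1
      rw [← Nat.cast_sum]
      rw [Nat.sum_range_choose]
      push_cast
      ring
    have step3 : (2:ℝ)^N * q ^ ((3:ℝ) * N / 8) ≤ q ^ ((3 : ℝ) * N / 16) := by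
      have ha : (0:ℝ) < q ^ ((3:ℝ) * N / 16) := Real.rpow_pos_of_pos hq0 _
      have hsplit2 : q ^ ((3:ℝ) * N / 8) = q ^ ((3:ℝ) * N / 16) * q ^ ((3:ℝ) * N / 16) := by
        rw [← Real.rpow_add hq0]
        ring_nf
      have h2 : (2:ℝ)^N * q ^ ((3:ℝ) * N / 16) ≤ 1 := by
        have hb : q ^ ((3:ℝ) * N / 16) ≤ ((1:ℝ)/64) ^ ((3:ℝ) * N / 16) := by
          apply Real.rpow_le_rpow hq0.le hq
          positivity
        have hc : ((1:ℝ)/64) = (2:ℝ) ^ (-6:ℝ) := by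
          rw [show (-6:ℝ) = ((-6:ℤ):ℝ) by norm_num, Real.rpow_intCast]
          norm_num
        calc (2:ℝ)^N * q ^ ((3:ℝ) * N / 16)
            ≤ (2:ℝ)^N * ((1:ℝ)/64) ^ ((3:ℝ) * N / 16) := by
              apply mul_le_mul_of_nonneg_left hb (by positivity)
          _ = (2:ℝ) ^ ((N:ℝ) + (-6) * ((3:ℝ) * N / 16)) := by
              rw [hc, ← Real.rpow_natCast 2 N, ← Real.rpow_mul (by norm_num),
                ← Real.rpow_add (by norm_num)]
          _ ≤ 1 := by
              apply Real.rpow_le_one_of_one_le_of_nonpos (by norm_num)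
              have : (0:ℝ) ≤ (N:ℝ) := Nat.cast_nonneg N
              linarith
      rw [hsplit2, ← mul_assoc]
      calc (2:ℝ)^N * q ^ ((3:ℝ) * N / 16) * q ^ ((3:ℝ) * N / 16)
          ≤ 1 * q ^ ((3:ℝ) * N / 16) := mul_le_mul_of_nonneg_right h2 ha.le
        _ = q ^ ((3:ℝ) * N / 16) := one_mul _
    calc _ ≤ _ := step1
      _ = _ := step2
      _ ≤ _ := step3
  linarith [hsum, htotal, key]
end

section
/- For every integer r ≥ 16, the infinite product over all primes p ≥ 64 of P(Bin(r, 1/p) ≤ (3/8)r) is at least 1 - 2^{1 - 3r/16}. -/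
open Finset

lemma tele_hasSum : HasSum (fun n : ℕ => 1/(((n:ℝ)+1)*((n:ℝ)+2))) 1 := by
  have hnn : ∀ n : ℕ, 0 ≤ 1/(((n:ℝ)+1)*((n:ℝ)+2)) := by
    intro n; positivity
  rw [hasSum_iff_tendsto_nat_of_nonneg hnn]
  have heq : ∀ n : ℕ, ∑ i ∈ Finset.range n, 1/(((i:ℝ)+1)*((i:ℝ)+2))
      = 1 - 1/((n:ℝ)+1) := by
    intro n
    calc ∑ i ∈ Finset.range n, 1/(((i:ℝ)+1)*((i:ℝ)+2))
        = ∑ i ∈ Finset.range n,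
            ((fun j : ℕ => 1/((j:ℝ)+1)) i - (fun j : ℕ => 1/((j:ℝ)+1)) (i+1)) := by
          apply Finset.sum_congr rfl
          intro i _
          have h1 : ((i:ℝ)+1) ≠ 0 := by positivity
          have h2 : ((i:ℝ)+2) ≠ 0 := by positivity
          show 1/(((i:ℝ)+1)*((i:ℝ)+2)) = 1/((i:ℝ)+1) - 1/(((i+1:ℕ):ℝ)+1)
          push_cast
          rw [div_sub_div _ _ h1 (by positivity : ((i:ℝ)+1+1) ≠ 0),
            div_eq_div_iff (by positivity) (by positivity)]
          ring
      _ = (fun j : ℕ => 1/((j:ℝ)+1)) 0 - (fun j : ℕ => 1/((j:ℝ)+1)) n :=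
          Finset.sum_range_sub' _ n
      _ = 1 - 1/((n:ℝ)+1) := by norm_num
  simp only [heq]
  have : Filter.Tendsto (fun n : ℕ => 1/((n:ℝ)+1)) Filter.atTop (nhds 0) :=
    tendsto_one_div_add_atTop_nhds_zero_nat
  simpa using Filter.Tendsto.const_sub 1 this

lemma prod_one_sub_le' {ι : Type*} (s : Finset ι) (f : ι → ℝ)
    (h0 : ∀ i ∈ s, 0 ≤ f i) (h1 : ∀ i ∈ s, f i ≤ 1) :
    1 - ∑ i ∈ s, (1 - f i) ≤ ∏ i ∈ s, f i := by
  induction s using Finset.cons_induction with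
  | empty => simp
  | cons a s ha ih =>
    rw [Finset.prod_cons, Finset.sum_cons]
    have h0a := h0 a (Finset.mem_cons_self a s)
    have h1a := h1 a (Finset.mem_cons_self a s)
    have ihs := ih (fun i hi => h0 i (Finset.mem_cons_of_mem hi))
      (fun i hi => h1 i (Finset.mem_cons_of_mem hi))
    have hsnn : 0 ≤ ∑ i ∈ s, (1 - f i) :=
      Finset.sum_nonneg fun i hi => by linarith [h1 i (Finset.mem_cons_of_mem hi)]
    nlinarith [Finset.prod_nonneg (fun i hi => h0 i (Finset.mem_cons_of_mem hi))]

lemma binomCdf_facts (r p : ℕ) (hp : 64 ≤ p) :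
    0 ≤ binomCdf r (1/(p:ℝ)) ((3/8:ℝ)*r) ∧ binomCdf r (1/(p:ℝ)) ((3/8:ℝ)*r) ≤ 1 ∧
      1 - binomCdf r (1/(p:ℝ)) ((3/8:ℝ)*r)
        ≤ (2:ℝ)^r * (1/(p:ℝ)) ^ ((3:ℝ)*r/8) := by
  have hp0 : (0:ℝ) < p := by positivity
  set q : ℝ := 1/(p:ℝ) with hq
  have hq0 : 0 < q := by positivity
  have hq1 : q ≤ 1 := by
    rw [hq, div_le_one hp0]
    have : (64:ℝ) ≤ p := by exact_mod_cast hp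
    linarith
  have hterm : ∀ k, 0 ≤ (r.choose k : ℝ) * q ^ k * (1 - q) ^ (r - k) := by
    intro k
    have h1q : (0:ℝ) ≤ 1 - q := by linarith
    positivity
  have hsum : ∑ k ∈ Finset.range (r+1), (r.choose k : ℝ) * q ^ k * (1 - q) ^ (r - k) = 1 := by
    have h := add_pow q (1-q) r
    have h2 : q + (1 - q) = 1 := by ring
    rw [h2, one_pow] at h
    conv_rhs => rw [h]
    apply Finset.sum_congr rfl
    intro k _
    ring
  have hle : ∀ k ∈ Finset.range (r+1),
      (if (k:ℝ) ≤ (3/8:ℝ)*r then (r.choose k : ℝ) * q ^ k * (1 - q) ^ (r - k) else 0)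
        ≤ (r.choose k : ℝ) * q ^ k * (1 - q) ^ (r - k) := by
    intro k _
    split
    · exact le_refl _
    · exact hterm k
  have h0 : 0 ≤ binomCdf r q ((3/8:ℝ)*r) := by
    apply Finset.sum_nonneg
    intro k _
    split
    · exact hterm k
    · exact le_refl _
  have h1 : binomCdf r q ((3/8:ℝ)*r) ≤ 1 := by
    rw [← hsum]
    exact Finset.sum_le_sum hle
  refine ⟨h0, h1, ?_⟩
  have hdiff : 1 - binomCdf r q ((3/8:ℝ)*r)
      = ∑ k ∈ Finset.range (r+1),
          (if (k:ℝ) ≤ (3/8:ℝ)*r then 0 else (r.choose k : ℝ) * q ^ k * (1 - q) ^ (r - k)) := by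
    nth_rewrite 1 [← hsum]
    unfold binomCdf
    rw [← Finset.sum_sub_distrib]
    apply Finset.sum_congr rfl
    intro k _
    split <;> ring
  rw [hdiff]
  have hbound : ∀ k ∈ Finset.range (r+1),
      (if (k:ℝ) ≤ (3/8:ℝ)*r then 0 else (r.choose k : ℝ) * q ^ k * (1 - q) ^ (r - k))
        ≤ (r.choose k : ℝ) * q ^ ((3:ℝ)*r/8) := by
    intro k _
    split
    · exact mul_nonneg (by positivity) (Real.rpow_nonneg hq0.le _)
    · rename_i h
      push_neg at h
      have hk : (3:ℝ)*r/8 ≤ (k:ℝ) := by linarith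
      have e1 : (1 - q) ^ (r - k) ≤ 1 := by
        apply pow_le_one₀ <;> linarith
      have e2 : q ^ k ≤ q ^ ((3:ℝ)*r/8) := by
        rw [← Real.rpow_natCast q k]
        exact Real.rpow_le_rpow_of_exponent_ge hq0 hq1 hk
      calc (r.choose k : ℝ) * q ^ k * (1 - q) ^ (r - k)
          ≤ (r.choose k : ℝ) * q ^ k * 1 := by
            apply mul_le_mul_of_nonneg_left e1
            positivity
        _ = (r.choose k : ℝ) * q ^ k := by ring
        _ ≤ (r.choose k : ℝ) * q ^ ((3:ℝ)*r/8) := by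
            apply mul_le_mul_of_nonneg_left e2
            positivity
  calc ∑ k ∈ Finset.range (r+1),
        (if (k:ℝ) ≤ (3/8:ℝ)*r then 0 else (r.choose k : ℝ) * q ^ k * (1 - q) ^ (r - k))
      ≤ ∑ k ∈ Finset.range (r+1), (r.choose k : ℝ) * q ^ ((3:ℝ)*r/8) :=
        Finset.sum_le_sum hbound
    _ = (2:ℝ)^r * q ^ ((3:ℝ)*r/8) := by
        rw [← Finset.sum_mul]
        congr 1
        rw [← Nat.cast_sum]
        rw [Nat.sum_range_choose]
        push_cast
        ring

theorem stmt_4 (r : ℕ) (hr : 16 ≤ r) :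
    1 - 2 ^ (1 - (3 : ℝ) * r / 16) ≤
      ∏' p : {p : ℕ // p.Prime ∧ 64 ≤ p}, binomCdf r (1 / (p : ℕ)) ((3 / 8 : ℝ) * r) := by
  have hr16 : (16:ℝ) ≤ (r:ℝ) := by exact_mod_cast hr
  set T := {p : ℕ // p.Prime ∧ 64 ≤ p}
  set f : T → ℝ := fun p => binomCdf r (1 / ((p:ℕ):ℝ)) ((3 / 8 : ℝ) * r) with hfdef
  set A : ℝ := (2:ℝ) ^ ((12:ℝ) - 5*r/4) with hA
  have hA0 : 0 < A := Real.rpow_pos_of_pos two_pos _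
  set g : ℕ → ℝ := fun n => A * (1/(((n:ℝ)+1)*((n:ℝ)+2))) with hg
  have hgsum : HasSum g A := by
    have h := tele_hasSum.mul_left A
    rw [mul_one] at h
    exact h
  have hgnn : ∀ n, 0 ≤ g n := by
    intro n
    apply mul_nonneg hA0.le
    positivity
  set e : T → ℕ := fun p => (p:ℕ) - 2 with he
  have heinj : Function.Injective e := by
    intro p q hpq
    have hp2 : 2 ≤ (p:ℕ) := le_trans (by norm_num) p.2.2
    have hq2 : 2 ≤ (q:ℕ) := le_trans (by norm_num) q.2.2
    apply Subtype.ext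
    simp only [he] at hpq
    omega
  -- key facts per prime
  have hfacts : ∀ p : T, 0 ≤ f p ∧ f p ≤ 1 ∧ 1 - f p ≤ g (e p) := by
    intro p
    obtain ⟨h0, h1, h2⟩ := binomCdf_facts r (p:ℕ) p.2.2
    refine ⟨h0, h1, ?_⟩
    have hp64 : (64:ℝ) ≤ ((p:ℕ):ℝ) := by exact_mod_cast p.2.2
    have hp0 : (0:ℝ) < ((p:ℕ):ℝ) := by linarith
    set x : ℝ := ((p:ℕ):ℝ) with hx
    have hq0 : (0:ℝ) < 1/x := by positivity
    -- rpow estimate : (1/x)^(3r/8) ≤ 2^(12-9r/4) * (1/((x-1)*x))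
    have hexp : (0:ℝ) ≤ 3*(r:ℝ)/8 - 2 := by linarith
    have step1 : (1/x) ^ ((3:ℝ)*r/8) = (1/x) ^ ((3:ℝ)*r/8 - 2) * (1/x) ^ ((2:ℕ):ℝ) := by
      rw [← Real.rpow_add hq0]
      norm_num
    have step2 : (1/x) ^ ((3:ℝ)*r/8 - 2) ≤ ((1:ℝ)/64) ^ ((3:ℝ)*r/8 - 2) := by
      apply Real.rpow_le_rpow hq0.le _ hexp
      rw [div_le_div_iff₀ hp0 (by norm_num)]
      linarith
    have h64 : ((1:ℝ)/64) = (2:ℝ) ^ (-6:ℝ) := by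
      rw [show ((-6:ℝ)) = -((6:ℕ):ℝ) by norm_num, Real.rpow_neg two_pos.le,
        Real.rpow_natCast]
      norm_num
    have step3 : ((1:ℝ)/64) ^ ((3:ℝ)*r/8 - 2) = (2:ℝ) ^ ((12:ℝ) - 9*r/4) := by
      rw [h64, ← Real.rpow_mul two_pos.le]
      ring_nf
    have step4 : (1/x) ^ ((2:ℕ):ℝ) ≤ 1/((x-1)*x) := by
      rw [Real.rpow_natCast]
      have hxx : (0:ℝ) < (x-1)*x := by nlinarith
      rw [div_pow, one_pow, div_le_div_iff₀ (by positivity) hxx]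
      nlinarith
    have key : (2:ℝ)^r * (1/x) ^ ((3:ℝ)*r/8) ≤ g (e p) := by
      have hcast : ((e p : ℕ):ℝ) = x - 2 := by
        simp only [he]
        have hp2 : 2 ≤ (p:ℕ) := le_trans (by norm_num) p.2.2
        push_cast [Nat.cast_sub hp2]
        ring
      have hge : g (e p) = A * (1/((x-1)*x)) := by
        simp only [hg, hcast]
        ring_nf
      rw [hge, hA]
      calc (2:ℝ)^r * (1/x) ^ ((3:ℝ)*r/8)
          ≤ (2:ℝ)^r * ((2:ℝ) ^ ((12:ℝ) - 9*r/4) * (1/((x-1)*x))) := by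
            apply mul_le_mul_of_nonneg_left _ (by positivity)
            rw [step1]
            calc (1/x) ^ ((3:ℝ)*r/8 - 2) * (1/x) ^ ((2:ℕ):ℝ)
                ≤ ((1:ℝ)/64) ^ ((3:ℝ)*r/8 - 2) * (1/((x-1)*x)) := by
                  apply mul_le_mul step2 step4 (Real.rpow_nonneg hq0.le _)
                  exact Real.rpow_nonneg (by norm_num) _
              _ = (2:ℝ) ^ ((12:ℝ) - 9*r/4) * (1/((x-1)*x)) := by rw [step3]
        _ = (2:ℝ) ^ ((12:ℝ) - 5*r/4) * (1/((x-1)*x)) := by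
            rw [← Real.rpow_natCast 2 r, ← mul_assoc, ← Real.rpow_add two_pos,
              show (r:ℝ) + ((12:ℝ) - 9*(r:ℝ)/4) = (12:ℝ) - 5*(r:ℝ)/4 by ring]
    exact le_trans h2 key
  -- summability
  have hsumge : Summable (fun p : T => g (e p)) := hgsum.summable.comp_injective heinj
  have htsumle : ∑' p : T, g (e p) ≤ A := by
    rw [← hgsum.tsum_eq]
    exact Summable.tsum_le_tsum_of_inj e heinj (fun c _ => hgnn c) (fun p => le_rfl) hsumge
      hgsum.summable
  have hAle : A ≤ (2:ℝ) ^ (1 - (3:ℝ)*r/16) := by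
    rw [hA]
    apply Real.rpow_le_rpow_of_exponent_le one_le_two
    linarith
  -- partial product bound
  have hkey : ∀ s : Finset T, 1 - 2 ^ (1 - (3:ℝ)*r/16) ≤ ∏ p ∈ s, f p := by
    intro s
    have h1 : 1 - ∑ p ∈ s, (1 - f p) ≤ ∏ p ∈ s, f p :=
      prod_one_sub_le' s f (fun p _ => (hfacts p).1) (fun p _ => (hfacts p).2.1)
    have h2 : ∑ p ∈ s, (1 - f p) ≤ ∑ p ∈ s, g (e p) :=
      Finset.sum_le_sum fun p _ => (hfacts p).2.2
    have h3 : ∑ p ∈ s, g (e p) ≤ ∑' p : T, g (e p) :=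
      Summable.sum_le_tsum s (fun p _ => hgnn (e p)) hsumge
    linarith
  -- the product converges to its infimum
  have hanti : Antitone (fun s : Finset T => ∏ p ∈ s, f p) := by
    intro s u hsu
    calc ∏ p ∈ u, f p = (∏ p ∈ u \ s, f p) * ∏ p ∈ s, f p := (Finset.prod_sdiff hsu).symm
      _ ≤ 1 * ∏ p ∈ s, f p := by
          apply mul_le_mul_of_nonneg_right _ (Finset.prod_nonneg fun p _ => (hfacts p).1)
          exact Finset.prod_le_one (fun p _ => (hfacts p).1) (fun p _ => (hfacts p).2.1)
      _ = ∏ p ∈ s, f p := one_mul _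
  have hbdd : BddBelow (Set.range (fun s : Finset T => ∏ p ∈ s, f p)) := by
    refine ⟨0, ?_⟩
    rintro x ⟨s, rfl⟩
    exact Finset.prod_nonneg fun p _ => (hfacts p).1
  have hprod : HasProd f (⨅ s : Finset T, ∏ p ∈ s, f p) :=
    tendsto_atTop_ciInf hanti hbdd
  calc 1 - 2 ^ (1 - (3:ℝ)*r/16)
      ≤ ⨅ s : Finset T, ∏ p ∈ s, f p := le_ciInf hkey
    _ = ∏' p : T, f p := (hprod.tprod_eq).symm
end

section
/- For fixed r ≥ 2, if X_1^{(n)}, ..., X_r^{(n)} are independent uniform random variables on {1,...,n}, then lim_{n→∞} P(gcd(X_1^{(n)}, ..., X_r^{(n)}) = 1) = 1/ζ(r). -/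
/-!
Möbius inversion over the gcd counts the coprime tuples in `{1,…,n}^r` as
`∑_{d ≤ n} μ(d) ⌊n/d⌋^r`. After division by `n^r` the `d`-th term tends to `μ(d)/d^r` and is
bounded by `1/d^r`, which is summable for `r ≥ 2`; by dominated convergence the ratio tends to
`∑ μ(d)/d^r`, the inverse of `ζ(r)` since `μ * 1 = δ` as Dirichlet series.
-/

open Finset ArithmeticFunction Filter Topology
open scoped ArithmeticFunction.Moebius ArithmeticFunction.zeta

theorem sum_Icc_filter_dvd_moebius (R : Type*) [Ring R] {m n : ℕ} (hm : m ≠ 0) (hmn : m ≤ n) :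
    ∑ d ∈ Icc 1 n with d ∣ m, (μ d : R) = if m = 1 then 1 else 0 := by
  have hdiv : {d ∈ Icc 1 n | d ∣ m} = m.divisors := by
    ext d
    simp only [mem_filter, mem_Icc, Nat.mem_divisors, hm, ne_eq, not_false_eq_true, and_true]
    exact ⟨fun h => h.2, fun h => ⟨⟨Nat.pos_of_dvd_of_pos h (by omega),
      (Nat.le_of_dvd (by omega) h).trans hmn⟩, h⟩⟩
  have := congrArg (· m) (coe_moebius_mul_coe_zeta (R := R))
  simpa only [coe_mul_zeta_apply, intCoe_apply, one_apply, hdiv] using this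

theorem card_piFinset_Icc_filter_dvd_gcd {ι : Type*} [Fintype ι] [DecidableEq ι] (n d : ℕ) :
    #{a ∈ Fintype.piFinset (fun _ : ι => Icc 1 n) | d ∣ univ.gcd a} = (n / d) ^ Fintype.card ι := by
  have : {a ∈ Fintype.piFinset (fun _ : ι => Icc 1 n) | d ∣ univ.gcd a}
      = Fintype.piFinset (fun _ : ι => {x ∈ Icc 1 n | d ∣ x}) := by
    ext a
    simp [Finset.dvd_gcd_iff, forall_and]
  rw [this, Fintype.card_piFinset, prod_const, ← Nat.Ioc_filter_dvd_card_eq_div]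
  rfl

theorem card_piFinset_Icc_filter_gcd_eq_one (R : Type*) [Ring R] {ι : Type*} [Fintype ι]
    [DecidableEq ι] [Nonempty ι] (n : ℕ) :
    (#{a ∈ Fintype.piFinset (fun _ : ι => Icc 1 n) | univ.gcd a = 1} : R)
      = ∑ d ∈ Icc 1 n, (μ d : R) * ((n / d : ℕ) : R) ^ Fintype.card ι := by
  set S := Fintype.piFinset fun _ : ι => Icc 1 n
  have hgcd : ∀ a ∈ S, univ.gcd a ≠ 0 ∧ univ.gcd a ≤ n := by
    intro a ha
    obtain ⟨i⟩ := ‹Nonempty ι›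
    have hai := mem_Icc.mp (Fintype.mem_piFinset.mp ha i)
    have hdvd : univ.gcd a ∣ a i := gcd_dvd (mem_univ i)
    exact ⟨fun h => by simp_all, (Nat.le_of_dvd (by omega) hdvd).trans hai.2⟩
  calc (#{a ∈ S | univ.gcd a = 1} : R)
      = ∑ a ∈ S, ∑ d ∈ Icc 1 n with d ∣ univ.gcd a, (μ d : R) := by
        rw [natCast_card_filter]
        exact sum_congr rfl fun a ha =>
          (sum_Icc_filter_dvd_moebius R (hgcd a ha).1 (hgcd a ha).2).symm
    _ = ∑ d ∈ Icc 1 n, ∑ a ∈ S with d ∣ univ.gcd a, (μ d : R) := by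
        simp only [sum_filter]
        exact sum_comm
    _ = ∑ d ∈ Icc 1 n, (μ d : R) * ((n / d : ℕ) : R) ^ Fintype.card ι := by
        refine sum_congr rfl fun d _ => ?_
        rw [sum_const, card_piFinset_Icc_filter_dvd_gcd, nsmul_eq_mul, Nat.cast_comm, Nat.cast_pow]

theorem tendsto_natCast_div_div_natCast (d : ℕ) :
    Tendsto (fun n : ℕ => ((n / d : ℕ) : ℝ) / n) atTop (𝓝 (1 / d)) := by
  rcases eq_or_ne d 0 with rfl | hd
  · simp
  have hx : Tendsto (fun n : ℕ => (n : ℝ) / d) atTop atTop :=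
    tendsto_natCast_atTop_atTop.atTop_div_const (by positivity)
  rw [← one_mul (1 / (d : ℝ))]
  refine ((tendsto_nat_floor_div_atTop.comp hx).mul_const (1 / (d : ℝ))).congr' ?_
  filter_upwards [eventually_ne_atTop 0] with n hn
  rw [Function.comp_apply, Nat.floor_div_eq_div]
  field_simp

theorem tendsto_sum_Icc_mul_natDiv_pow_div_pow {f : ℕ → ℝ} {C : ℝ} (hf : ∀ d, |f d| ≤ C)
    {r : ℕ} (hr : 2 ≤ r) :
    Tendsto (fun n : ℕ => ∑ d ∈ Icc 1 n, f d * ((n / d : ℕ) : ℝ) ^ r / (n : ℝ) ^ r) atTop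
      (𝓝 (∑' d, f d / (d : ℝ) ^ r)) := by
  set g : ℕ → ℕ → ℝ := fun n d => f d * (((n / d : ℕ) : ℝ) / n) ^ r
  have hr0 : r ≠ 0 := by omega
  have hg : ∀ n, ∑' d, g n d = ∑ d ∈ Icc 1 n, f d * ((n / d : ℕ) : ℝ) ^ r / (n : ℝ) ^ r := by
    intro n
    rw [tsum_eq_sum (s := Icc 1 n)]
    · exact sum_congr rfl fun d _ => by simp only [g, div_pow]; ring
    · intro d hd
      have : n / d = 0 := by
        rcases Nat.eq_zero_or_pos d with rfl | hd0
        · simp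
        · exact Nat.div_eq_of_lt (by simp only [mem_Icc, not_and, not_le] at hd; exact hd hd0)
      simp [g, this, hr0]
  have hC : 0 ≤ C := (abs_nonneg _).trans (hf 0)
  refine (tendsto_tsum_of_dominated_convergence (bound := fun d : ℕ => C / (d : ℝ) ^ r)
    (((Real.summable_one_div_nat_pow (p := r)).mpr (by omega)).mul_left C |>.congr fun d => by ring)
    (fun d => ?_) ?_).congr hg
  · have := ((tendsto_natCast_div_div_natCast d).pow r).const_mul (f d)
    simpa only [g, div_pow, one_pow, mul_div_assoc, mul_one_div] using this
  · refine Eventually.of_forall fun n d => ?_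
    have hq : 0 ≤ ((n / d : ℕ) : ℝ) / n := by positivity
    have hq1 : ((n / d : ℕ) : ℝ) / n ≤ 1 / d := by
      rcases eq_or_ne n 0 with rfl | hn
      · simp
      rw [div_le_iff₀ (by positivity)]
      calc ((n / d : ℕ) : ℝ) ≤ n / d := Nat.cast_div_le
        _ = 1 / d * n := by ring
    calc ‖g n d‖ = |f d| * (((n / d : ℕ) : ℝ) / n) ^ r := by simp [g]
      _ ≤ C * (1 / d) ^ r := by gcongr; exact hf d
      _ = C / (d : ℝ) ^ r := by ring

theorem tsum_moebius_div_rpow_mul_tsum_one_div_add_one_rpow {s : ℝ} (hs : 1 < s) :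
    (∑' n : ℕ, (μ n : ℝ) / (n : ℝ) ^ s) * ∑' n : ℕ, 1 / ((n : ℝ) + 1) ^ s = 1 := by
  have hs' : 1 < (s : ℂ).re := by simpa using hs
  have h := LSeries_zeta_mul_Lseries_moebius hs'
  rw [LSeries_zeta_eq_riemannZeta hs', zeta_eq_tsum_one_div_nat_add_one_cpow hs',
    LSeries_def₀ (by simp)] at h
  rw [mul_comm, ← Complex.ofReal_inj]
  simpa (disch := positivity) only [Complex.ofReal_mul, Complex.ofReal_tsum, Complex.ofReal_div,
    Complex.ofReal_cpow, Complex.ofReal_one, Complex.ofReal_add, Complex.ofReal_natCast,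
    Complex.ofReal_intCast] using h

/-- For fixed `r ≥ 2`, the probability that `r` independent uniform random variables on
`{1,…,n}` are mutually coprime tends to `1/ζ(r)` as `n → ∞`. -/
theorem stmt_14 (r : ℕ) (hr : 2 ≤ r) :
    Filter.Tendsto
      (fun n : ℕ =>
        ((((Fintype.piFinset fun _ : Fin r => Finset.Icc 1 n).filter
            (fun a : Fin r → ℕ => Finset.univ.gcd a = 1)).card : ℝ)) / (n : ℝ) ^ r)
      Filter.atTop
      (nhds (1 / ∑' n : ℕ, 1 / ((n : ℝ) + 1) ^ (r : ℝ))) := by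
  have hinv := tsum_moebius_div_rpow_mul_tsum_one_div_add_one_rpow (s := r) (by exact_mod_cast hr)
  rw [one_div, ← eq_inv_of_mul_eq_one_left hinv]
  simp only [Real.rpow_natCast]
  have : Nonempty (Fin r) := ⟨⟨0, by omega⟩⟩
  refine (tendsto_sum_Icc_mul_natDiv_pow_div_pow (C := 1) (fun d => ?_) hr).congr fun n => ?_
  · exact_mod_cast abs_moebius_le_one
  · rw [card_piFinset_Icc_filter_gcd_eq_one, Fintype.card_fin, sum_div]
end
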